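/- For the block magnetization chain of the multi-component Ising model: (i) if β < β_cr, then for every starting value s and every t ≥ 0, Σ_{i=1}^m Var_s(S_t^{(i)}) ≤ 8 α m a_max² / (a_min² n) and Var_s(‖S_t‖₁) ≤ 8 α m² a_max² / (a_min² n); (ii) if β = β_cr, then for every starting value s and every t ≥ 0, Var_s(‖S_t‖₁) ≤ 4 m² a_max² t / (a_min² n²). -/

import Mathlib

open Finset MeasureTheory Real Filter

namespace MultiIsing

/-- The real spin value attached to a Boolean spin. -/
def spin (b : Bool) : ℝ := if b then 1 else -1

/-- `r₊(s) = e^{βs}/(e^{βs}+e^{-βs})`. -/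
noncomputable def rp (β s : ℝ) : ℝ :=
  Real.exp (β * s) / (Real.exp (β * s) + Real.exp (-(β * s)))

/-- `r₋(s) = e^{-βs}/(e^{βs}+e^{-βs})`. -/
noncomputable def rm (β s : ℝ) : ℝ :=
  Real.exp (-(β * s)) / (Real.exp (β * s) + Real.exp (-(β * s)))

variable {m : ℕ}

/-- `g : Fin n → Fin m` realizes the partition of `n` vertices into groups
of sizes `n * p i`. -/
def IsPartition (n : ℕ) (p : Fin m → ℝ) (g : Fin n → Fin m) : Prop :=
  0 < n ∧ ∀ i, ((Finset.univ.filter fun v => g v = i).card : ℝ) = n * p i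

/-- Standing hypotheses on the parameters of the multi-component Ising model. -/
structure Params (m : ℕ) (p : Fin m → ℝ) (k : Fin m → Fin m → ℝ) : Prop where
  hm : 0 < m
  hp : ∀ i, 0 < p i
  hpsum : ∑ i, p i = 1
  hkpos : ∀ i j, 0 < k i j
  hksymm : ∀ i j, k i j = k j i

/-- `a` is the (normalized, positive) Perron–Frobenius left eigenvector of the
matrix `B = (p i * k i j)`; its eigenvalue is then necessarily
`∑ i j, a i * p i * k i j`. -/
structure PFvec (m : ℕ) (p : Fin m → ℝ) (k : Fin m → Fin m → ℝ) (a : Fin m → ℝ) : Prop where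
  hpos : ∀ i, 0 < a i
  hsum : ∑ i, a i = 1
  heig : ∀ j, ∑ i, a i * (p i * k i j) = (∑ i, ∑ j, a i * (p i * k i j)) * a j

/-- The critical inverse temperature `β_cr = 1 / (∑ i j, a i * p i * k i j)`. -/
noncomputable def betaCr (p : Fin m → ℝ) (k : Fin m → Fin m → ℝ) (a : Fin m → ℝ) : ℝ :=
  1 / (∑ i, ∑ j, a i * (p i * k i j))

/-- The mean field `S^v = ∑_{w ≠ v} K(v,w) σ(w)` at vertex `v`. -/
noncomputable def meanField (n : ℕ) (k : Fin m → Fin m → ℝ) (g : Fin n → Fin m)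
    (σ : Fin n → Bool) (v : Fin n) : ℝ :=
  ∑ w ∈ Finset.univ.filter (fun w => w ≠ v), (k (g v) (g w) / n) * spin (σ w)

/-- One-step transition probabilities of the Glauber dynamics: a uniformly chosen
vertex is refreshed to `±1` with probabilities `r±(S^v)`. -/
noncomputable def glauber (n : ℕ) (β : ℝ) (k : Fin m → Fin m → ℝ) (g : Fin n → Fin m)
    (σ σ' : Fin n → Bool) : ℝ :=
  (1 / n) * ∑ v,
    ((if σ' = Function.update σ v true then rp β (meanField n k g σ v) else 0)
      + (if σ' = Function.update σ v false then rm β (meanField n k g σ v) else 0))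

/-- `t`-step transition probabilities of a transition kernel on a finite state space. -/
noncomputable def iter {Ω : Type*} [Fintype Ω] [DecidableEq Ω] (P : Ω → Ω → ℝ) :
    ℕ → Ω → Ω → ℝ
  | 0 => fun x y => if x = y then 1 else 0
  | (t + 1) => fun x y => ∑ z, iter P t x z * P z y

/-- The Gibbs measure `μ_n(σ) ∝ exp(β ∑_{unordered pairs v ≠ w} K(v,w) σ(v) σ(w))`. -/
noncomputable def gibbs (n : ℕ) (β : ℝ) (k : Fin m → Fin m → ℝ) (g : Fin n → Fin m)
    (σ : Fin n → Bool) : ℝ :=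
  Real.exp (β * ((1 / 2) * ∑ v, ∑ w ∈ Finset.univ.filter (fun w => w ≠ v),
      (k (g v) (g w) / n) * spin (σ v) * spin (σ w))) /
    ∑ σ' : Fin n → Bool, Real.exp (β * ((1 / 2) * ∑ v, ∑ w ∈ Finset.univ.filter (fun w => w ≠ v),
      (k (g v) (g w) / n) * spin (σ' v) * spin (σ' w)))

/-- The total-variation distance between two distributions on a finite space. -/
noncomputable def tvDist {Ω : Type*} [Fintype Ω] (μ ν : Ω → ℝ) : ℝ :=
  (1 / 2) * ∑ x, |μ x - ν x|

/-- The worst-case total-variation distance to stationarity after `t` steps. -/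
noncomputable def dn (n : ℕ) (β : ℝ) (k : Fin m → Fin m → ℝ) (g : Fin n → Fin m)
    (t : ℕ) : ℝ :=
  ⨆ σ : Fin n → Bool, tvDist (fun σ' => iter (glauber n β k g) t σ σ') (gibbs n β k g)

/-- The total-variation mixing time `t_mix = min {t : d_n(t) ≤ 1/4}`. -/
noncomputable def tmix (n : ℕ) (β : ℝ) (k : Fin m → Fin m → ℝ) (g : Fin n → Fin m) : ℕ :=
  sInf {t : ℕ | dn n β k g t ≤ 1 / 4}

/-- The normalized block magnetization `S^{(i)}(σ) = (1/n) ∑_{v ∈ G_i} σ(v)`. -/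
noncomputable def Smag (n : ℕ) (g : Fin n → Fin m) (σ : Fin n → Bool) (i : Fin m) : ℝ :=
  (1 / n) * ∑ v ∈ Finset.univ.filter (fun v => g v = i), spin (σ v)

/-- The unnormalized block magnetization `M^{(i)}(σ) = ∑_{v ∈ G_i} σ(v)`. -/
noncomputable def Mvec (n : ℕ) (g : Fin n → Fin m) (σ : Fin n → Bool) (i : Fin m) : ℝ :=
  ∑ v ∈ Finset.univ.filter (fun v => g v = i), spin (σ v)

/-- The `i`-th block Hamming distance between two configurations. -/
noncomputable def blockDist (n : ℕ) (g : Fin n → Fin m) (σ σ' : Fin n → Bool) (i : Fin m) : ℝ :=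
  (1 / 2) * ∑ v ∈ Finset.univ.filter (fun v => g v = i), |spin (σ v) - spin (σ' v)|

/-- The matrix `Q = (1 - 1/n) I + (β/n) B` where `B = (p i * k i j)`. -/
noncomputable def Qmat (n : ℕ) (β : ℝ) (p : Fin m → ℝ) (k : Fin m → Fin m → ℝ) :
    Matrix (Fin m) (Fin m) ℝ :=
  (1 - 1 / (n : ℝ)) • (1 : Matrix (Fin m) (Fin m) ℝ) +
    (β / n) • Matrix.of (fun i j => p i * k i j)

/-- `μ` is the law of the Markov chain with transition probabilities `P`
started at `x0`, as a measure on path space. -/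
def IsPathMeasure {Ω : Type*} [Fintype Ω] [DecidableEq Ω] [MeasurableSpace Ω]
    (P : Ω → Ω → ℝ) (x0 : Ω) (μ : Measure (ℕ → Ω)) : Prop :=
  IsProbabilityMeasure μ ∧
    ∀ t : ℕ, ∀ f : ℕ → Ω,
      (μ {ω | ∀ s ≤ t, ω s = f s}).toReal =
        (if f 0 = x0 then ∏ s ∈ Finset.range t, P (f s) (f (s + 1)) else 0)

/-- `μ` is a coupling of two copies of the Markov chain with transition
probabilities `P`, started at `x0` and `y0` respectively. -/
def IsCoupling {Ω : Type*} [Fintype Ω] [DecidableEq Ω] [MeasurableSpace Ω]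
    (P : Ω → Ω → ℝ) (x0 y0 : Ω) (μ : Measure (ℕ → Ω × Ω)) : Prop :=
  IsProbabilityMeasure μ ∧
    (∀ t : ℕ, ∀ f : ℕ → Ω,
      (μ {ω | ∀ s ≤ t, (ω s).1 = f s}).toReal =
        (if f 0 = x0 then ∏ s ∈ Finset.range t, P (f s) (f (s + 1)) else 0)) ∧
    (∀ t : ℕ, ∀ f : ℕ → Ω,
      (μ {ω | ∀ s ≤ t, (ω s).2 = f s}).toReal =
        (if f 0 = y0 then ∏ s ∈ Finset.range t, P (f s) (f (s + 1)) else 0))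


/-- The expectation `E_σ[f(σ_t)]` for the Glauber dynamics started at `σ`. -/
noncomputable def Ef (n : ℕ) (β : ℝ) {m : ℕ} (k : Fin m → Fin m → ℝ) (g : Fin n → Fin m)
    (σ : Fin n → Bool) (t : ℕ) (f : (Fin n → Bool) → ℝ) : ℝ :=
  ∑ σ' : Fin n → Bool, iter (glauber n β k g) t σ σ' * f σ'

/-- The variance `Var_σ(f(σ_t))` for the Glauber dynamics started at `σ`. -/
noncomputable def Varf (n : ℕ) (β : ℝ) {m : ℕ} (k : Fin m → Fin m → ℝ) (g : Fin n → Fin m)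
    (σ : Fin n → Bool) (t : ℕ) (f : (Fin n → Bool) → ℝ) : ℝ :=
  Ef n β k g σ t (fun τ => (f τ) ^ 2) - (Ef n β k g σ t f) ^ 2

/-!
Weight site `v` by `a (g v)`. If flipping spin `v` changes `f` by at most `c * a (g v)`, one
Glauber step `P f` has the same property with `c` replaced by `ρ_n c`, where
`ρ_n = (n - 1 + β / β_cr) / n`: a flip at `u` is seen directly by the `n - 1` heat-bath averages
at `v ≠ u`, and through their fields it costs `∑_v β k(g v, g u) a(g v) / n`, which the left
eigenvector equation turns into `(β / β_cr) a(g u)`. By the law of total variance,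
`Var(f(σ_{t+1})) = Var(P f(σ_t))` plus the mean of a one-step variance, which is at most the
squared largest jump `(c a_max)²`; inductively `Var_σ(f(σ_t)) ≤ ∑_{s < t} (ρ_n^s c a_max)²`.
The block magnetizations and `‖S‖₁` jump by at most `2 / n`, so `c = 2 / (n a_min)`; summing the
geometric series for `ρ_n < 1` gives (i), and `ρ_n = 1` at `β = β_cr` gives (ii).
-/

open Function

lemma rp_eq_sigmoid (β s : ℝ) : rp β s = sigmoid (2 * β * s) := by
  rw [rp, sigmoid_def, show -(2 * β * s) = -(β * s) - β * s by ring, Real.exp_sub]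
  field_simp

lemma rm_eq_one_sub_rp (β s : ℝ) : rm β s = 1 - rp β s := by
  rw [rm, rp, eq_sub_iff_add_eq, ← add_div, add_comm, div_self (by positivity)]

lemma rp_nonneg (β s : ℝ) : 0 ≤ rp β s := rp_eq_sigmoid β s ▸ sigmoid_nonneg _

lemma rp_le_one (β s : ℝ) : rp β s ≤ 1 := rp_eq_sigmoid β s ▸ sigmoid_le_one _

lemma lipschitzWith_sigmoid : LipschitzWith 4⁻¹ sigmoid :=
  lipschitzWith_of_nnnorm_deriv_le differentiable_sigmoid fun x => by
    have h0 : 0 ≤ sigmoid x * (1 - sigmoid x) :=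
      mul_nonneg (sigmoid_nonneg x) (sub_nonneg.2 (sigmoid_le_one x))
    rw [deriv_sigmoid, ← NNReal.coe_le_coe, coe_nnnorm, Real.norm_eq_abs, abs_of_nonneg h0]
    push_cast
    nlinarith [sq_nonneg (sigmoid x - 1 / 2)]

lemma abs_rp_sub_rp_le (β s t : ℝ) : |rp β s - rp β t| ≤ |β| / 2 * |s - t| := by
  rw [rp_eq_sigmoid, rp_eq_sigmoid, ← Real.dist_eq]
  calc dist (sigmoid (2 * β * s)) (sigmoid (2 * β * t))
      ≤ 4⁻¹ * dist (2 * β * s) (2 * β * t) := lipschitzWith_sigmoid.dist_le_mul _ _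
    _ = |β| / 2 * |s - t| := by
      rw [Real.dist_eq, ← mul_sub, abs_mul, abs_mul, abs_two]
      ring

section MarkovKernel

variable {Ω : Type*} [Fintype Ω] (P : Ω → Ω → ℝ)

def markovOp (f : Ω → ℝ) (x : Ω) : ℝ := ∑ y, P x y * f y

structure IsStochastic : Prop where
  nonneg : ∀ x y, 0 ≤ P x y
  sum_eq_one : ∀ x, ∑ y, P x y = 1

lemma markovOp_sub (f f' : Ω → ℝ) (x : Ω) :
    markovOp P (fun y => f y - f' y) x = markovOp P f x - markovOp P f' x := by
  simp only [markovOp, mul_sub, Finset.sum_sub_distrib]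

variable {P}

lemma IsStochastic.markovOp_const (hP : IsStochastic P) (C : ℝ) (x : Ω) :
    markovOp P (fun _ => C) x = C := by
  rw [markovOp, ← Finset.sum_mul, hP.sum_eq_one, one_mul]

lemma IsStochastic.markovOp_le (hP : IsStochastic P) {f : Ω → ℝ} {C : ℝ} (h : ∀ y, f y ≤ C)
    (x : Ω) : markovOp P f x ≤ C :=
  calc markovOp P f x ≤ markovOp P (fun _ => C) x :=
        Finset.sum_le_sum fun y _ => mul_le_mul_of_nonneg_left (h y) (hP.nonneg x y)
    _ = C := hP.markovOp_const C x

/-- A one-step variance is at most the second moment about the starting value `f x`. -/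
lemma IsStochastic.markovOp_sq_sub_sq_le (hP : IsStochastic P) {f : Ω → ℝ} {x : Ω} {d : ℝ}
    (h : ∀ y, P x y ≠ 0 → |f y - f x| ≤ d) :
    markovOp P (fun y => f y ^ 2) x - markovOp P f x ^ 2 ≤ d ^ 2 := by
  have hsecond : markovOp P (fun y => (f y - f x) ^ 2) x ≤ d ^ 2 :=
    calc markovOp P (fun y => (f y - f x) ^ 2) x ≤ markovOp P (fun _ => d ^ 2) x := by
          refine Finset.sum_le_sum fun y _ => ?_
          rcases eq_or_ne (P x y) 0 with h0 | h0
          · simp [h0]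
          · refine mul_le_mul_of_nonneg_left ?_ (hP.nonneg x y)
            exact (sq_abs _).symm.trans_le (pow_le_pow_left₀ (abs_nonneg _) (h y h0) 2)
      _ = d ^ 2 := hP.markovOp_const _ x
  have hexpand : markovOp P (fun y => (f y - f x) ^ 2) x
      = markovOp P (fun y => f y ^ 2) x - 2 * f x * markovOp P f x + f x ^ 2 := by
    calc markovOp P (fun y => (f y - f x) ^ 2) x
        = ∑ y, (P x y * f y ^ 2 - 2 * f x * (P x y * f y) + f x ^ 2 * P x y) :=
          Finset.sum_congr rfl fun y _ => by ring
      _ = _ := by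
          rw [Finset.sum_add_distrib, Finset.sum_sub_distrib, ← Finset.mul_sum, ← Finset.mul_sum,
            hP.sum_eq_one, mul_one]
          rfl
  nlinarith [sq_nonneg (markovOp P f x - f x)]

variable [DecidableEq Ω] (P)

lemma markovOp_iter_zero (f : Ω → ℝ) (x : Ω) : markovOp (iter P 0) f x = f x := by
  simp [markovOp, iter]

lemma markovOp_iter_succ (t : ℕ) (f : Ω → ℝ) (x : Ω) :
    markovOp (iter P (t + 1)) f x = markovOp (iter P t) (markovOp P f) x := by
  simp only [markovOp, iter, Finset.sum_mul, Finset.mul_sum]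
  rw [Finset.sum_comm]
  exact Finset.sum_congr rfl fun z _ => Finset.sum_congr rfl fun y _ => by ring

variable {P}

lemma IsStochastic.iter (hP : IsStochastic P) (t : ℕ) : IsStochastic (iter P t) := by
  induction t with
  | zero =>
    refine ⟨fun x y => ?_, fun x => ?_⟩
    · simp only [MultiIsing.iter]; split <;> norm_num
    · simp [MultiIsing.iter]
  | succ t ih =>
    refine ⟨fun x y => Finset.sum_nonneg fun z _ => mul_nonneg (ih.nonneg x z) (hP.nonneg z y),
      fun x => ?_⟩
    have h := markovOp_iter_succ P t (fun _ => 1) x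
    simp only [markovOp, mul_one] at h
    simp [h, hP.sum_eq_one, ih.sum_eq_one]

variable (P)

noncomputable def chainVar (t : ℕ) (x : Ω) (f : Ω → ℝ) : ℝ :=
  markovOp (iter P t) (fun y => f y ^ 2) x - markovOp (iter P t) f x ^ 2

lemma chainVar_zero (x : Ω) (f : Ω → ℝ) : chainVar P 0 x f = 0 := by
  simp [chainVar, markovOp_iter_zero]

lemma chainVar_succ (t : ℕ) (x : Ω) (f : Ω → ℝ) :
    chainVar P (t + 1) x f = chainVar P t x (markovOp P f) +
      markovOp (iter P t) (fun y => markovOp P (fun z => f z ^ 2) y - markovOp P f y ^ 2) x := by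
  rw [chainVar, chainVar, markovOp_iter_succ, markovOp_iter_succ, markovOp_sub]
  ring

end MarkovKernel

section UpdateLipschitz

variable {V : Type*} [DecidableEq V]

/-- `f` is `c`-Lipschitz for the Hamming metric with site weights `w`. -/
def UpdateLipschitz (w : V → ℝ) (c : ℝ) (f : (V → Bool) → ℝ) : Prop :=
  ∀ σ v b, |f (update σ v b) - f σ| ≤ c * w v

lemma updateLipschitz_of_forall_le {w : V → ℝ} {wmin C : ℝ} {f : (V → Bool) → ℝ}
    (hwmin : 0 < wmin) (hw : ∀ v, wmin ≤ w v) (hC : 0 ≤ C)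
    (hf : ∀ σ v b, |f (update σ v b) - f σ| ≤ C) : UpdateLipschitz w (C / wmin) f :=
  fun σ v b => (hf σ v b).trans <|
    calc C = C / wmin * wmin := (div_mul_cancel₀ C hwmin.ne').symm
      _ ≤ C / wmin * w v := mul_le_mul_of_nonneg_left (hw v) (div_nonneg hC hwmin.le)

variable [Fintype V]

theorem IsStochastic.chainVar_le_of_updateLipschitz {P : (V → Bool) → (V → Bool) → ℝ}
    (hP : IsStochastic P) (hsupp : ∀ σ τ, P σ τ ≠ 0 → ∃ v b, τ = update σ v b)
    {w : V → ℝ} {W ρ : ℝ} (hW : ∀ v, w v ≤ W) (hρ : 0 ≤ ρ)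
    (hcontr : ∀ c f, 0 ≤ c → UpdateLipschitz w c f → UpdateLipschitz w (ρ * c) (markovOp P f))
    (t : ℕ) : ∀ σ f c, 0 ≤ c → UpdateLipschitz w c f →
      chainVar P t σ f ≤ ∑ s ∈ Finset.range t, (ρ ^ s * (c * W)) ^ 2 := by
  induction t with
  | zero => intro σ f c _ _; simp [chainVar_zero]
  | succ t ih =>
    intro σ f c hc hf
    have hstep : ∀ τ, markovOp P (fun z => f z ^ 2) τ - markovOp P f τ ^ 2 ≤ (c * W) ^ 2 := by
      refine fun τ => hP.markovOp_sq_sub_sq_le fun τ' hτ' => ?_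
      obtain ⟨v, b, rfl⟩ := hsupp τ τ' hτ'
      exact (hf τ v b).trans (mul_le_mul_of_nonneg_left (hW v) hc)
    calc chainVar P (t + 1) σ f
        ≤ ∑ s ∈ Finset.range t, (ρ ^ s * (ρ * c * W)) ^ 2 + (c * W) ^ 2 := by
          rw [chainVar_succ]
          exact add_le_add (ih σ _ _ (mul_nonneg hρ hc) (hcontr c f hc hf))
            ((hP.iter t).markovOp_le hstep σ)
      _ = ∑ s ∈ Finset.range (t + 1), (ρ ^ s * (c * W)) ^ 2 := by
          rw [Finset.sum_range_succ']
          congr 1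
          · exact Finset.sum_congr rfl fun s _ => by ring
          · ring

end UpdateLipschitz

lemma sum_sq_pow_mul_le_of_lt_one {n : ℕ} (hn : 0 < n) {x : ℝ} (hx₀ : 0 ≤ x) (hx₁ : x < 1)
    (C : ℝ) (t : ℕ) :
    ∑ s ∈ Finset.range t, (((n - 1 + x) / n) ^ s * C) ^ 2 ≤ C ^ 2 * n / (1 - x) := by
  set ρ : ℝ := (n - 1 + x) / n with hρ
  have hn' : (1 : ℝ) ≤ n := Nat.one_le_cast.2 hn
  have hρ₀ : 0 ≤ ρ := div_nonneg (by linarith) (by positivity)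
  have hρ₁ : ρ < 1 := (div_lt_one (by positivity)).2 (by linarith)
  have h1ρ : 1 - ρ = (1 - x) / n := by rw [hρ]; field_simp; ring
  calc ∑ s ∈ Finset.range t, (ρ ^ s * C) ^ 2 = C ^ 2 * ∑ s ∈ Finset.Ico 0 t, (ρ ^ 2) ^ s := by
        rw [Finset.range_eq_Ico, Finset.mul_sum]
        exact Finset.sum_congr rfl fun s _ => by rw [mul_pow, pow_right_comm, mul_comm]
    _ ≤ C ^ 2 * ((ρ ^ 2) ^ 0 / (1 - ρ ^ 2)) := by
        gcongr
        exact geom_sum_Ico_le_of_lt_one (by positivity) (by nlinarith)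
    _ ≤ C ^ 2 * (1 / (1 - ρ)) := by
        rw [pow_zero]
        gcongr
        nlinarith
    _ = C ^ 2 * n / (1 - x) := by
        rw [h1ρ]
        field_simp

lemma abs_spin_sub_spin_le (b b' : Bool) : |spin b - spin b'| ≤ 2 := by
  cases b <;> cases b' <;> norm_num [spin]

lemma abs_mix_sub_mix_le {p p' x x' y y' d e δ : ℝ} (hp'₀ : 0 ≤ p') (hp'₁ : p' ≤ 1)
    (hx : |x' - x| ≤ d) (hy : |y' - y| ≤ d) (hxy : |x - y| ≤ e) (hp : |p' - p| ≤ δ) :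
    |(p' * x' + (1 - p') * y') - (p * x + (1 - p) * y)| ≤ d + δ * e :=
  calc |(p' * x' + (1 - p') * y') - (p * x + (1 - p) * y)|
      = |p' * (x' - x) + (1 - p') * (y' - y) + (p' - p) * (x - y)| := by congr 1; ring
    _ ≤ p' * |x' - x| + (1 - p') * |y' - y| + |p' - p| * |x - y| := by
      refine (abs_add_le _ _).trans (add_le_add ((abs_add_le _ _).trans (le_of_eq ?_)) ?_)
      · rw [abs_mul, abs_mul, abs_of_nonneg hp'₀, abs_of_nonneg (sub_nonneg.2 hp'₁)]
      · rw [abs_mul]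
    _ ≤ p' * d + (1 - p') * d + δ * e := by
      gcongr
      exact (abs_nonneg _).trans hp
    _ = d + δ * e := by ring

section Glauber

variable {n : ℕ} {β : ℝ} {p : Fin m → ℝ} {k : Fin m → Fin m → ℝ} {g : Fin n → Fin m}

noncomputable def heatBathAvg (n : ℕ) (β : ℝ) (k : Fin m → Fin m → ℝ) (g : Fin n → Fin m)
    (f : (Fin n → Bool) → ℝ) (σ : Fin n → Bool) (v : Fin n) : ℝ :=
  rp β (meanField n k g σ v) * f (update σ v true) +
    rm β (meanField n k g σ v) * f (update σ v false)

lemma markovOp_glauber (f : (Fin n → Bool) → ℝ) (σ : Fin n → Bool) :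
    markovOp (glauber n β k g) f σ = 1 / n * ∑ v, heatBathAvg n β k g f σ v := by
  simp only [markovOp, glauber, heatBathAvg, mul_assoc, ← Finset.mul_sum, Finset.sum_mul,
    add_mul, ite_mul, zero_mul]
  rw [Finset.sum_comm]
  simp [Finset.sum_add_distrib]

lemma glauber_isStochastic (hn : 0 < n) : IsStochastic (glauber n β k g) where
  nonneg σ τ := by
    refine mul_nonneg (by positivity) (Finset.sum_nonneg fun v _ => add_nonneg ?_ ?_) <;>
      split_ifs <;> simp [rp_nonneg, rm_eq_one_sub_rp, rp_le_one]
  sum_eq_one σ := by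
    have h := markovOp_glauber (β := β) (k := k) (g := g) (fun _ => 1) σ
    simp only [markovOp, mul_one, heatBathAvg, rm_eq_one_sub_rp, add_sub_cancel,
      Finset.sum_const, Finset.card_univ, Fintype.card_fin, nsmul_eq_mul] at h
    rw [h]
    field_simp

lemma exists_update_of_glauber_ne_zero {σ τ : Fin n → Bool} (h : glauber n β k g σ τ ≠ 0) :
    ∃ v b, τ = update σ v b := by
  contrapose! h
  simp [glauber, h]

lemma meanField_update_self (σ : Fin n → Bool) (v : Fin n) (b : Bool) :
    meanField n k g (update σ v b) v = meanField n k g σ v :=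
  Finset.sum_congr rfl fun w hw => by rw [update_of_ne (Finset.mem_filter.1 hw).2]

lemma abs_meanField_update_sub_le (hk : ∀ i j, 0 ≤ k i j) (σ : Fin n → Bool) {u v : Fin n}
    (b : Bool) (hvu : v ≠ u) :
    |meanField n k g (update σ u b) v - meanField n k g σ v| ≤ 2 * k (g v) (g u) / n := by
  have hu : u ∈ Finset.univ.filter (fun w => w ≠ v) := by simp [Ne.symm hvu]
  rw [meanField, meanField, ← Finset.sum_sub_distrib,
    Finset.sum_eq_single_of_mem u hu fun w _ hwu => by rw [update_of_ne hwu, sub_self],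
    update_self, ← mul_sub, abs_mul, abs_of_nonneg (by have := hk (g v) (g u); positivity)]
  calc k (g v) (g u) / n * |spin b - spin (σ u)| ≤ k (g v) (g u) / n * 2 :=
        mul_le_mul_of_nonneg_left (abs_spin_sub_spin_le _ _) (div_nonneg (hk _ _) n.cast_nonneg)
    _ = 2 * k (g v) (g u) / n := by ring

lemma heatBathAvg_update_self (f : (Fin n → Bool) → ℝ) (σ : Fin n → Bool) (v : Fin n)
    (b : Bool) : heatBathAvg n β k g f (update σ v b) v = heatBathAvg n β k g f σ v := by
  simp only [heatBathAvg, meanField_update_self, update_idem]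

lemma abs_heatBathAvg_update_sub_le (hβ : 0 ≤ β) (hk : ∀ i j, 0 ≤ k i j) {w : Fin n → ℝ}
    {c : ℝ} {f : (Fin n → Bool) → ℝ} (hf : UpdateLipschitz w c f) (σ : Fin n → Bool)
    {u v : Fin n} (b : Bool) (hvu : v ≠ u) :
    |heatBathAvg n β k g f (update σ u b) v - heatBathAvg n β k g f σ v|
      ≤ c * w u + β * k (g v) (g u) / n * (c * w v) := by
  simp only [heatBathAvg, rm_eq_one_sub_rp, update_comm hvu.symm b true σ,
    update_comm hvu.symm b false σ]
  refine abs_mix_sub_mix_le (rp_nonneg _ _) (rp_le_one _ _) (hf _ u b) (hf _ u b) ?_ ?_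
  · simpa only [update_idem] using hf (update σ v false) v true
  · calc _ ≤ |β| / 2 * |meanField n k g (update σ u b) v - meanField n k g σ v| :=
          abs_rp_sub_rp_le _ _ _
      _ ≤ β / 2 * (2 * k (g v) (g u) / n) := by
          rw [abs_of_nonneg hβ]
          gcongr
          exact abs_meanField_update_sub_le hk σ b hvu
      _ = β * k (g v) (g u) / n := by ring

lemma sum_comp_eq_of_card (hcard : ∀ i, ((Finset.univ.filter fun v => g v = i).card : ℝ) = n * p i)
    (F : Fin m → ℝ) : ∑ v, F (g v) = n * ∑ i, p i * F i := by
  rw [← Finset.sum_fiberwise Finset.univ g, Finset.mul_sum]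
  refine Finset.sum_congr rfl fun i _ => ?_
  rw [Finset.sum_congr rfl fun v hv => congrArg F (Finset.mem_filter.1 hv).2, Finset.sum_const,
    nsmul_eq_mul, hcard]
  ring

lemma sum_interaction_mul_weight {a : Fin m → ℝ} {lam : ℝ}
    (hcard : ∀ i, ((Finset.univ.filter fun v => g v = i).card : ℝ) = n * p i)
    (heig : ∀ j, ∑ i, a i * (p i * k i j) = lam * a j) (j : Fin m) :
    ∑ v, k (g v) j * a (g v) = n * (lam * a j) := by
  rw [sum_comp_eq_of_card hcard fun i => k i j * a i, ← heig]
  exact congrArg _ (Finset.sum_congr rfl fun i _ => by ring)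

lemma updateLipschitz_markovOp_glauber (hβ : 0 ≤ β) (hk : ∀ i j, 0 ≤ k i j) {a : Fin m → ℝ}
    {lam : ℝ} (ha : ∀ i, 0 ≤ a i)
    (hcard : ∀ i, ((Finset.univ.filter fun v => g v = i).card : ℝ) = n * p i)
    (heig : ∀ j, ∑ i, a i * (p i * k i j) = lam * a j) {c : ℝ} (hc : 0 ≤ c)
    {f : (Fin n → Bool) → ℝ} (hf : UpdateLipschitz (fun v => a (g v)) c f) :
    UpdateLipschitz (fun v => a (g v)) ((n - 1 + β * lam) / n * c)
      (markovOp (glauber n β k g) f) := by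
  intro σ u b
  have hterm : ∀ v, |heatBathAvg n β k g f (update σ u b) v - heatBathAvg n β k g f σ v|
      ≤ (if v = u then 0 else c * a (g u)) + β * k (g v) (g u) / n * (c * a (g v)) := by
    intro v
    split_ifs with hvu
    · rw [hvu, heatBathAvg_update_self, sub_self, abs_zero, zero_add]
      have := hk (g u) (g u)
      have := ha (g u)
      positivity
    · exact abs_heatBathAvg_update_sub_le hβ hk hf σ b hvu
  have hsum : ∑ v, ((if v = u then 0 else c * a (g u)) + β * k (g v) (g u) / n * (c * a (g v)))
      = (n - 1 + β * lam) * (c * a (g u)) := by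
    have hdirect : ∑ v, (if v = u then 0 else c * a (g u)) = (n - 1) * (c * a (g u)) := by
      simp [Finset.sum_ite, Finset.filter_ne', Nat.cast_pred u.pos]
    have hn : (n : ℝ) ≠ 0 := Nat.cast_ne_zero.2 u.pos.ne'
    rw [Finset.sum_add_distrib, hdirect]
    calc (n - 1) * (c * a (g u)) + ∑ v, β * k (g v) (g u) / n * (c * a (g v))
        = (n - 1) * (c * a (g u)) + β * c / n * ∑ v, k (g v) (g u) * a (g v) := by
          rw [Finset.mul_sum]
          exact congrArg _ (Finset.sum_congr rfl fun v _ => by ring)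
      _ = (n - 1 + β * lam) * (c * a (g u)) := by
          rw [sum_interaction_mul_weight hcard heig]
          field_simp
  rw [markovOp_glauber, markovOp_glauber, ← mul_sub, ← Finset.sum_sub_distrib, abs_mul,
    abs_of_nonneg (by positivity)]
  calc 1 / (n : ℝ) * |∑ v, (heatBathAvg n β k g f (update σ u b) v - heatBathAvg n β k g f σ v)|
      ≤ 1 / n * ∑ v, ((if v = u then 0 else c * a (g u))
          + β * k (g v) (g u) / n * (c * a (g v))) := by
        gcongr
        exact (Finset.abs_sum_le_sum_abs _ _).trans (Finset.sum_le_sum fun v _ => hterm v)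
    _ = (n - 1 + β * lam) / n * c * a (g u) := by
        rw [hsum]
        ring

lemma abs_Smag_update_sub_le (σ : Fin n → Bool) (v : Fin n) (b : Bool) (i : Fin m) :
    |Smag n g (update σ v b) i - Smag n g σ i| ≤ if g v = i then 2 / (n : ℝ) else 0 := by
  rw [Smag, Smag, ← mul_sub, ← Finset.sum_sub_distrib, abs_mul, abs_of_nonneg (by positivity)]
  split_ifs with h
  · rw [Finset.sum_eq_single_of_mem v (by simp [h]) fun u _ huv => by
      rw [update_of_ne huv, sub_self], update_self]
    calc 1 / (n : ℝ) * |spin b - spin (σ v)| ≤ 1 / n * 2 := by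
          gcongr
          exact abs_spin_sub_spin_le _ _
      _ = 2 / n := by ring
  · rw [Finset.sum_eq_zero fun u hu => by
      rw [update_of_ne fun huv => h (by simpa [huv] using (Finset.mem_filter.1 hu).2), sub_self]]
    simp

lemma abs_Smag_update_sub_le_two_div (σ : Fin n → Bool) (v : Fin n) (b : Bool) (i : Fin m) :
    |Smag n g (update σ v b) i - Smag n g σ i| ≤ 2 / (n : ℝ) :=
  (abs_Smag_update_sub_le σ v b i).trans (by split_ifs; exacts [le_rfl, by positivity])

lemma abs_sum_abs_Smag_update_sub_le (σ : Fin n → Bool) (v : Fin n) (b : Bool) :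
    |(∑ i, |Smag n g (update σ v b) i|) - (∑ i, |Smag n g σ i|)| ≤ 2 / (n : ℝ) :=
  calc |(∑ i, |Smag n g (update σ v b) i|) - (∑ i, |Smag n g σ i|)|
      ≤ ∑ i, |Smag n g (update σ v b) i - Smag n g σ i| := by
        rw [← Finset.sum_sub_distrib]
        exact (Finset.abs_sum_le_sum_abs _ _).trans
          (Finset.sum_le_sum fun i _ => abs_abs_sub_abs_le_abs_sub _ _)
    _ ≤ ∑ i, if g v = i then 2 / (n : ℝ) else 0 :=
        Finset.sum_le_sum fun i _ => abs_Smag_update_sub_le σ v b i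
    _ = 2 / n := by simp

theorem Varf_le_of_abs_update_sub_le {a : Fin m → ℝ} (hP : Params m p k) (ha : PFvec m p k a)
    {amax amin : ℝ} (hamax : ∀ i, a i ≤ amax) (hamin₀ : 0 < amin) (hamin : ∀ i, amin ≤ a i)
    (hβ : 0 ≤ β) (hg : IsPartition n p g) {f : (Fin n → Bool) → ℝ}
    (hf : ∀ σ v b, |f (update σ v b) - f σ| ≤ 2 / (n : ℝ)) (σ : Fin n → Bool) (t : ℕ) :
    Varf n β k g σ t f ≤
      ∑ s ∈ Finset.range t, (((n - 1 + β / betaCr p k a) / n) ^ s * (2 / n / amin * amax)) ^ 2 := by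
  have hk : ∀ i j, 0 ≤ k i j := fun i j => (hP.hkpos i j).le
  have hlam : 0 ≤ ∑ i, ∑ j, a i * (p i * k i j) := Finset.sum_nonneg fun i _ =>
    Finset.sum_nonneg fun j _ => mul_nonneg (ha.hpos i).le (mul_nonneg (hP.hp i).le (hk i j))
  have hn : (1 : ℝ) ≤ n := Nat.one_le_cast.2 hg.1
  rw [betaCr, one_div, div_inv_eq_mul]
  refine (glauber_isStochastic hg.1).chainVar_le_of_updateLipschitz
    (fun _ _ => exists_update_of_glauber_ne_zero) (fun v => hamax (g v))
    (div_nonneg (by nlinarith [mul_nonneg hβ hlam]) (by positivity))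
    (fun c f hc hf => updateLipschitz_markovOp_glauber hβ hk (fun i => (ha.hpos i).le) hg.2
      ha.heig hc hf) t σ f _ (by positivity)
    (updateLipschitz_of_forall_le hamin₀ (fun v => hamin (g v)) (by positivity) hf)

end Glauber

lemma betaCr_pos {p : Fin m → ℝ} {k : Fin m → Fin m → ℝ} {a : Fin m → ℝ} (hP : Params m p k)
    (ha : PFvec m p k a) : 0 < betaCr p k a := by
  have hne : (Finset.univ : Finset (Fin m)).Nonempty := ⟨⟨0, hP.hm⟩, Finset.mem_univ _⟩
  refine one_div_pos.2 (Finset.sum_pos (fun i _ => Finset.sum_pos (fun j _ => ?_) hne) hne)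
  exact mul_pos (ha.hpos i) (mul_pos (hP.hp i) (hP.hkpos i j))

theorem magnetization_variance_bounds_general
    (m : ℕ) (p : Fin m → ℝ) (k : Fin m → Fin m → ℝ) (a : Fin m → ℝ)
    (hP : Params m p k) (ha : PFvec m p k a)
    (amax amin : ℝ)
    (hamax : IsGreatest (Set.range a) amax) (hamin : IsLeast (Set.range a) amin)
    (β : ℝ) (hβ0 : 0 ≤ β)
    (α : ℝ) (hα : α = 1 / (2 * (1 - β / betaCr p k a)))
    (n : ℕ) (g : Fin n → Fin m) (hg : IsPartition n p g) :
    -- (i) high temperature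
    (β < betaCr p k a →
      ∀ σ : Fin n → Bool, ∀ t : ℕ,
        (∑ i, Varf n β k g σ t (fun τ => Smag n g τ i)) ≤
          8 * α * m * amax ^ 2 / (amin ^ 2 * n) ∧
        Varf n β k g σ t (fun τ => ∑ i, |Smag n g τ i|) ≤
          8 * α * m ^ 2 * amax ^ 2 / (amin ^ 2 * n)) ∧
    -- (ii) critical temperature
    (β = betaCr p k a →
      ∀ σ : Fin n → Bool, ∀ t : ℕ,
        Varf n β k g σ t (fun τ => ∑ i, |Smag n g τ i|) ≤
          4 * m ^ 2 * amax ^ 2 * t / (amin ^ 2 * n ^ 2)) := by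
  obtain ⟨i₀, hi₀⟩ := hamin.1
  have hamin₀ : 0 < amin := hi₀ ▸ ha.hpos i₀
  have hvar := fun f => Varf_le_of_abs_update_sub_le (f := f) hP ha (fun i => hamax.2 ⟨i, rfl⟩)
    hamin₀ (fun i => hamin.2 ⟨i, rfl⟩) hβ0 hg
  have hn : (0 : ℝ) < n := Nat.cast_pos.2 hg.1
  have hm : (1 : ℝ) ≤ m ^ 2 := one_le_pow₀ (Nat.one_le_cast.2 hP.hm)
  refine ⟨fun hβ σ t => ?_, fun hβ σ t => ?_⟩
  · have hx : β / betaCr p k a < 1 := (div_lt_one (betaCr_pos hP ha)).2 hβ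
    have hbound : ∀ f, (∀ σ v b, |f (update σ v b) - f σ| ≤ 2 / (n : ℝ)) →
        Varf n β k g σ t f ≤ 8 * α * amax ^ 2 / (amin ^ 2 * n) := fun f hf =>
      (hvar f hf σ t).trans <| (sum_sq_pow_mul_le_of_lt_one hg.1
        (div_nonneg hβ0 (betaCr_pos hP ha).le) hx _ t).trans_eq (by rw [hα]; field_simp; ring)
    have hα₀ : 0 ≤ α := hα ▸ (one_div_pos.2 (by linarith)).le
    refine ⟨(Finset.sum_le_card_nsmul _ _ _ fun i _ =>
      hbound _ fun σ v b => abs_Smag_update_sub_le_two_div σ v b i).trans_eq ?_,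
      (hbound _ abs_sum_abs_Smag_update_sub_le).trans ?_⟩
    · simp only [Finset.card_univ, Fintype.card_fin, nsmul_eq_mul]
      ring
    · exact (le_mul_of_one_le_left (by positivity) hm).trans_eq (by ring)
  · have hx : β / betaCr p k a = 1 := by rw [hβ, div_self (betaCr_pos hP ha).ne']
    refine (hvar _ abs_sum_abs_Smag_update_sub_le σ t).trans ?_
    rw [hx, sub_add_cancel, div_self hn.ne']
    simp only [one_pow, one_mul, Finset.sum_const, Finset.card_range, nsmul_eq_mul]
    exact (le_mul_of_one_le_left (by positivity) hm).trans_eq (by field_simp; ring)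

/-- variance bounds for the block magnetization chain:
if `β < β_cr` then `∑ i Var_s(S_t^{(i)}) ≤ 8αm a_max²/(a_min² n)` and
`Var_s(‖S_t‖₁) ≤ 8αm² a_max²/(a_min² n)`; if `β = β_cr` then
`Var_s(‖S_t‖₁) ≤ 4m² a_max² t/(a_min² n²)`. -/
theorem magnetization_variance_bounds
    (m : ℕ) (p : Fin m → ℝ) (k : Fin m → Fin m → ℝ) (a : Fin m → ℝ)
    (hP : Params m p k) (ha : PFvec m p k a)
    (amax amin : ℝ)
    (hamax : IsGreatest (Set.range a) amax) (hamin : IsLeast (Set.range a) amin)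
    (β : ℝ) (hβ0 : 0 ≤ β)
    (α : ℝ) (hα : α = 1 / (2 * (1 - β / betaCr p k a)))
    (n : ℕ) (hn : 0 < n) (g : Fin n → Fin m) (hg : IsPartition n p g) :
    -- (i) high temperature
    (β < betaCr p k a →
      ∀ σ : Fin n → Bool, ∀ t : ℕ,
        (∑ i, Varf n β k g σ t (fun τ => Smag n g τ i)) ≤
          8 * α * m * amax ^ 2 / (amin ^ 2 * n) ∧
        Varf n β k g σ t (fun τ => ∑ i, |Smag n g τ i|) ≤
          8 * α * m ^ 2 * amax ^ 2 / (amin ^ 2 * n)) ∧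
    -- (ii) critical temperature
    (β = betaCr p k a →
      ∀ σ : Fin n → Bool, ∀ t : ℕ,
        Varf n β k g σ t (fun τ => ∑ i, |Smag n g τ i|) ≤
          4 * m ^ 2 * amax ^ 2 * t / (amin ^ 2 * n ^ 2)) :=
  magnetization_variance_bounds_general m p k a hP ha amax amin hamax hamin β hβ0 α hα n g hg

end MultiIsing
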